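/- Fix integers n ≥ 2, N ≥ 1, κ ≥ 1, maps f : ℝ^(2n−1) × ℝ → ℝ and ĉ : ℝ × ℝ^(2n−1) → ℝ, a dataset of triples (y_i⁺, ζ_i, u_i) ∈ ℝ × ℝ^(2n−1) × ℝ, i = 1,…,N, δ > 0, and a class-K∞ function γ such that ‖ζ_i⁺ − Φ(ζ, y_i⁺)‖ ≤ γ(‖ζ_i − ζ‖) for every i and every ζ ∈ ℝ^(2n−1). Suppose sets A⁰, …, A^κ ⊆ ℝ^(2n−1) are constructed as: A⁰ = ⋃_{i ∈ I₀} B̄(ζ_i⁺, r⁰_i) with B̄(ζ_i⁺, r⁰_i) ⊆ S_δ for each i ∈ I₀; and for 1 ≤ j ≤ κ, A^j = ⋃_{i ∈ I_j} B̄(ζ_i, γ⁻¹(r^j_i)) with B̄(ζ_i⁺, r^j_i) ⊆ A^{j−1} for each i ∈ I_j, where I₀,…,I_κ ⊆ {1,…,N} and all radii are nonnegative. Then for every ζ₀ ∈ A^κ there exist indices i₁ ∈ I_κ, i₂ ∈ I_{κ−1}, …, i_κ ∈ I₁ such that ζ₀ ∈ B̄(ζ_{i₁}, γ⁻¹(r^κ_{i₁})),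 and the closed-loop trajectory ζ_l := Φ(ζ_{l−1}, y_{i_l}⁺), l = 1,…,κ, satisfies ζ_l ∈ B̄(ζ_{i_l}⁺, r^{κ−l+1}_{i_l}) ⊆ A^{κ−l} for every l; in particular |(ζ_κ)ₙ| ≤ δ. -/

import Mathlib

/-!
The γ-bound says that `Φ(·, y_i⁺)` maps the ball `B̄(ζ_i, γ⁻¹(r))` into `B̄(ζ_i⁺, r)`.
Since each such ball around `ζ_i⁺` used for `A^j` lies in `A^{j−1}`, every state of `A^j`
has a reference `y_i⁺` steering it into `A^{j−1}`; following these choices from `A^κ`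
reaches `A⁰ ⊆ S_δ` after `κ` steps.
-/

/-- The closed-loop one-step map with reference `yr`:
`Φ(ζ, yr) = (y₂,…,yₙ, f(ζ, ĉ(yr, ζ)), u₂,…,u_{n−1}, ĉ(yr, ζ))` for the augmented
state `ζ = (y₁,…,yₙ,u₁,…,u_{n−1}) ∈ ℝ^(2n−1)` (0-indexed coordinates). -/
noncomputable def Phi (n : ℕ) (f : EuclideanSpace ℝ (Fin (2*n-1)) → ℝ → ℝ)
    (chat : ℝ → EuclideanSpace ℝ (Fin (2*n-1)) → ℝ)
    (ζ : EuclideanSpace ℝ (Fin (2*n-1))) (yr : ℝ) : EuclideanSpace ℝ (Fin (2*n-1)) :=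
  WithLp.toLp 2 fun k =>
    if (k : ℕ) = n - 1 then f ζ (chat yr ζ)
    else if h : (k : ℕ) = 2*n - 2 then chat yr ζ
    else ζ ⟨(k : ℕ) + 1, by have := k.isLt; omega⟩

/-- For a data triple `(y_i⁺, ζ_i, u_i)`, the shifted successor state
`ζ_i⁺ = (y_{i,2},…,y_{i,n}, y_i⁺, u_{i,2},…,u_{i,n−1}, u_i)`. -/
noncomputable def zplus (n : ℕ) (yp : ℝ) (ζ : EuclideanSpace ℝ (Fin (2*n-1))) (ui : ℝ) :
    EuclideanSpace ℝ (Fin (2*n-1)) :=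
  WithLp.toLp 2 fun k =>
    if (k : ℕ) = n - 1 then yp
    else if h : (k : ℕ) = 2*n - 2 then ui
    else ζ ⟨(k : ℕ) + 1, by have := k.isLt; omega⟩

/-- Backward reachable set `R⁻(A) = {ζ : ∃ i, Φ(ζ, y_i⁺) ∈ A}`. -/
def Rminus (n N : ℕ) (f : EuclideanSpace ℝ (Fin (2*n-1)) → ℝ → ℝ)
    (chat : ℝ → EuclideanSpace ℝ (Fin (2*n-1)) → ℝ) (yd : Fin N → ℝ)
    (A : Set (EuclideanSpace ℝ (Fin (2*n-1)))) : Set (EuclideanSpace ℝ (Fin (2*n-1))) :=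
  {ζ | ∃ i : Fin N, Phi n f chat ζ (yd i) ∈ A}

/-- `S_δ = {ζ : |ζₙ| ≤ δ}` (the n-th coordinate is index `n-1`, 0-indexed). -/
def Sdelta (n : ℕ) (hn : 1 ≤ n) (δ : ℝ) : Set (EuclideanSpace ℝ (Fin (2*n-1))) :=
  {ζ | |ζ ⟨n - 1, by omega⟩| ≤ δ}

open Metric Set

theorem mapsTo_closedBall_of_dist_le_comp {X Y : Type*} [PseudoMetricSpace X]
    [PseudoMetricSpace Y] {g : X → Y} {c : X} {p : Y} {γ : ℝ → ℝ} {ρ : ℝ}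
    (hγ : MonotoneOn γ (Ici 0)) (hρ : 0 ≤ ρ) (hg : ∀ x, dist (g x) p ≤ γ (dist x c)) :
    MapsTo g (closedBall c ρ) (closedBall p (γ ρ)) := fun x hx =>
  (hg x).trans (hγ dist_nonneg hρ hx)

theorem exists_trajectory_of_forall_exists_step {X ι : Type*} [Nonempty ι] (Φ : X → ι → X)
    (A : ℕ → Set X) (P : ℕ → X → ι → Prop) (κ : ℕ)
    (hstep : ∀ j, 1 ≤ j → j ≤ κ → ∀ x ∈ A j, ∃ i, P j x i ∧ Φ x i ∈ A (j - 1))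
    {x₀ : X} (hx₀ : x₀ ∈ A κ) :
    ∃ (idx : ℕ → ι) (traj : ℕ → X), traj 0 = x₀ ∧
      (∀ l, traj (l + 1) = Φ (traj l) (idx (l + 1))) ∧
      (∀ l ≤ κ, traj l ∈ A (κ - l)) ∧
      ∀ l < κ, P (κ - l) (traj l) (idx (l + 1)) := by
  have hsel : ∀ j x, ∃ i, 1 ≤ j → j ≤ κ → x ∈ A j → P j x i ∧ Φ x i ∈ A (j - 1) := by
    intro j x
    by_cases h : 1 ≤ j ∧ j ≤ κ ∧ x ∈ A j
    · obtain ⟨i, hi⟩ := hstep j h.1 h.2.1 x h.2.2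
      exact ⟨i, fun _ _ _ => hi⟩
    · exact ⟨Classical.arbitrary ι, fun h₁ h₂ h₃ => absurd ⟨h₁, h₂, h₃⟩ h⟩
  choose σ hσ using hsel
  let traj : ℕ → X := fun l => Nat.rec x₀ (fun m x => Φ x (σ (κ - m) x)) l
  have hmem : ∀ l ≤ κ, traj l ∈ A (κ - l) := by
    intro l hl
    induction l with
    | zero => exact hx₀
    | succ m ih =>
      have h := (hσ (κ - m) (traj m) (by omega) (Nat.sub_le _ _) (ih (by omega))).2
      rwa [Nat.sub_sub] at h
  refine ⟨fun l => σ (κ - (l - 1)) (traj (l - 1)), traj, rfl, fun _ => rfl, hmem,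
    fun l hl => ?_⟩
  exact (hσ (κ - l) (traj l) (by omega) (Nat.sub_le _ _) (hmem l hl.le)).1

/-- Theorem 1: for the explicitly constructed sets
`A⁰ = ⋃_{i∈I₀} B̄(ζ_i⁺, r⁰_i) ⊆ S_δ` and `A^j = ⋃_{i∈I_j} B̄(ζ_i, γ⁻¹(r^j_i))`
(with `B̄(ζ_i⁺, r^j_i) ⊆ A^{j−1}`), from any `ζ₀ ∈ A^κ` one can select reference
indices `i₁ ∈ I_κ, …, i_κ ∈ I₁` so that the closed-loop trajectory satisfies
`ζ_l ∈ B̄(ζ_{i_l}⁺, r^{κ−l+1}_{i_l}) ⊆ A^{κ−l}`; in particular `|(ζ_κ)ₙ| ≤ δ`. -/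
theorem stmt_7 (n N κ : ℕ) (hn : 2 ≤ n) (hN : 1 ≤ N) (hκ : 1 ≤ κ)
    (f : EuclideanSpace ℝ (Fin (2*n-1)) → ℝ → ℝ)
    (chat : ℝ → EuclideanSpace ℝ (Fin (2*n-1)) → ℝ)
    (yd : Fin N → ℝ) (ζd : Fin N → EuclideanSpace ℝ (Fin (2*n-1))) (ud : Fin N → ℝ)
    (δ : ℝ)
    (γ γinv : ℝ → ℝ)
    (hγ_mono : StrictMonoOn γ (Set.Ici (0:ℝ)))
    (hγinv_nonneg : ∀ r, 0 ≤ r → 0 ≤ γinv r)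
    (hγinv_right : ∀ r, 0 ≤ r → γ (γinv r) = r)
    (hγ_bound : ∀ (i : Fin N) (ζ : EuclideanSpace ℝ (Fin (2*n-1))),
      ‖zplus n (yd i) (ζd i) (ud i) - Phi n f chat ζ (yd i)‖ ≤ γ ‖ζd i - ζ‖)
    (A : ℕ → Set (EuclideanSpace ℝ (Fin (2*n-1))))
    (I : ℕ → Set (Fin N)) (r : ℕ → Fin N → ℝ)
    (hr : ∀ j i, 0 ≤ r j i)
    (hA0 : A 0 = ⋃ i ∈ I 0, Metric.closedBall (zplus n (yd i) (ζd i) (ud i)) (r 0 i))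
    (hball0 : ∀ i ∈ I 0,
      Metric.closedBall (zplus n (yd i) (ζd i) (ud i)) (r 0 i) ⊆ Sdelta n (by omega) δ)
    (hAj : ∀ j : ℕ, 1 ≤ j → j ≤ κ →
      A j = ⋃ i ∈ I j, Metric.closedBall (ζd i) (γinv (r j i)))
    (hballj : ∀ j : ℕ, 1 ≤ j → j ≤ κ → ∀ i ∈ I j,
      Metric.closedBall (zplus n (yd i) (ζd i) (ud i)) (r j i) ⊆ A (j - 1)) :
    ∀ ζ0 ∈ A κ, ∃ (idx : ℕ → Fin N) (traj : ℕ → EuclideanSpace ℝ (Fin (2*n-1))),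
      traj 0 = ζ0 ∧
      (∀ l : ℕ, traj (l+1) = Phi n f chat (traj l) (yd (idx (l+1)))) ∧
      idx 1 ∈ I κ ∧
      ζ0 ∈ Metric.closedBall (ζd (idx 1)) (γinv (r κ (idx 1))) ∧
      (∀ l : ℕ, 1 ≤ l → l ≤ κ →
        idx l ∈ I (κ - l + 1) ∧
        traj l ∈ Metric.closedBall
          (zplus n (yd (idx l)) (ζd (idx l)) (ud (idx l))) (r (κ - l + 1) (idx l)) ∧
        Metric.closedBall
          (zplus n (yd (idx l)) (ζd (idx l)) (ud (idx l))) (r (κ - l + 1) (idx l))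
          ⊆ A (κ - l)) ∧
      |traj κ ⟨n - 1, by omega⟩| ≤ δ := by
  intro ζ0 hζ0
  have : Nonempty (Fin N) := ⟨⟨0, hN⟩⟩
  have hmaps : ∀ j i, MapsTo (fun ζ => Phi n f chat ζ (yd i))
      (closedBall (ζd i) (γinv (r j i))) (closedBall (zplus n (yd i) (ζd i) (ud i)) (r j i)) := by
    intro j i
    have h := mapsTo_closedBall_of_dist_le_comp (g := fun ζ => Phi n f chat ζ (yd i))
      (c := ζd i) hγ_mono.monotoneOn (hγinv_nonneg _ (hr j i)) fun ζ => by
        rw [dist_comm, dist_eq_norm, dist_comm, dist_eq_norm]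
        exact hγ_bound i ζ
    rwa [hγinv_right _ (hr j i)] at h
  have hstep : ∀ j, 1 ≤ j → j ≤ κ → ∀ ζ ∈ A j, ∃ i,
      (i ∈ I j ∧ ζ ∈ closedBall (ζd i) (γinv (r j i))) ∧ Phi n f chat ζ (yd i) ∈ A (j - 1) := by
    intro j hj₁ hj₂ ζ hζ
    rw [hAj j hj₁ hj₂, mem_iUnion₂] at hζ
    obtain ⟨i, hi, hball⟩ := hζ
    exact ⟨i, ⟨hi, hball⟩, hballj j hj₁ hj₂ i hi (hmaps j i hball)⟩
  obtain ⟨idx, traj, htraj₀, hsucc, hmem, hsel⟩ :=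
    exists_trajectory_of_forall_exists_step _ A _ κ hstep hζ0
  have hsel₀ := hsel 0 hκ
  rw [Nat.sub_zero, htraj₀] at hsel₀
  refine ⟨idx, traj, htraj₀, hsucc, hsel₀.1, hsel₀.2, fun l hl₁ hl₂ => ?_, ?_⟩
  · obtain ⟨m, rfl⟩ : ∃ m, l = m + 1 := ⟨l - 1, by omega⟩
    obtain ⟨hi, hball⟩ := hsel m (by omega)
    rw [show κ - (m + 1) + 1 = κ - m by omega, ← Nat.sub_sub]
    exact ⟨hi, hsucc m ▸ hmaps _ _ hball, hballj (κ - m) (by omega) tsub_le_self _ hi⟩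
  · have h := hmem κ le_rfl
    rw [Nat.sub_self, hA0, mem_iUnion₂] at h
    obtain ⟨i, hi, hball⟩ := h
    exact hball0 i hi hball
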